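/- arXiv:1603.07685 — 7 statements merged into one kernel-verified Lean document; each statement's English description precedes it below -/
import Mathlib

section
/- For α ∈ (0,1), the function F₁(x) = (1-x)²/(1-x^(α+1)) is monotonically decreasing on the interval (0,1). -/
/-!
Write `(1 - x)² / (1 - x ^ s) = (1 - x) / q x` with `q x = (1 - x ^ s) / (1 - x)`, the slope of the
chord of `t ↦ t ^ s` between `x` and `1`. For `s ≥ 1` this function is convex, so `q` is
monotone; hence the quotient of the positive antitone `1 - x` by the positive monotone `q` is
antitone.
-/

open Set

lemma monotoneOn_one_sub_rpow_div_one_sub {s : ℝ} (hs : 1 ≤ s) :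
    MonotoneOn (fun x : ℝ => (1 - x ^ s) / (1 - x)) (Ico 0 1) := by
  intro x hx y hy hxy
  have hsecant := (convexOn_rpow hs).secant_mono (a := 1) (mem_Ici.2 zero_le_one)
    (mem_Ici.2 hx.1) (mem_Ici.2 hy.1) hx.2.ne hy.2.ne hxy
  simp only [Real.one_rpow] at hsecant
  rwa [← neg_sub 1 x, ← neg_sub 1 (x ^ s), ← neg_sub 1 y, ← neg_sub 1 (y ^ s),
    neg_div_neg_eq, neg_div_neg_eq] at hsecant

lemma antitoneOn_one_sub_sq_div_one_sub_rpow {s : ℝ} (hs : 1 ≤ s) :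
    AntitoneOn (fun x : ℝ => (1 - x) ^ 2 / (1 - x ^ s)) (Ico 0 1) := by
  have hq_pos : ∀ x ∈ Ico (0 : ℝ) 1, 0 < (1 - x ^ s) / (1 - x) := fun x hx =>
    div_pos (sub_pos.2 (Real.rpow_lt_one hx.1 hx.2 (by linarith))) (sub_pos.2 hx.2)
  have hrewrite : ∀ x ∈ Ico (0 : ℝ) 1,
      (1 - x) ^ 2 / (1 - x ^ s) = (1 - x) / ((1 - x ^ s) / (1 - x)) := fun x hx => by
    rw [div_div_eq_mul_div, sq]
  intro x hx y hy hxy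
  simp only [hrewrite x hx, hrewrite y hy]
  exact div_le_div₀ (sub_nonneg.2 hx.2.le) (by linarith) (hq_pos x hx)
    (monotoneOn_one_sub_rpow_div_one_sub hs hx hy hxy)

theorem F1_antitone (α : ℝ) (hα : α ∈ Set.Ioo (0 : ℝ) 1) :
    AntitoneOn (fun x : ℝ => (1 - x) ^ 2 / (1 - x ^ (α + 1))) (Set.Ioo (0 : ℝ) 1) :=
  (antitoneOn_one_sub_sq_div_one_sub_rpow (by linarith [hα.1])).mono Ioo_subset_Ico_self
end

section
/- For α ∈ (0,1), the function F₂(x) = (x-1)²/(x^(α+1)-1) is monotonically increasing on the interval (1,∞). -/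
/-! With `p = α + 1`, the numerator of the derivative of `(x - 1) ^ 2 / (x ^ p - 1)` is
`(x - 1) * g x` where `g x = 2 * (x ^ p - 1) - p * (x - 1) * x ^ (p - 1)`. Now `g 1 = 0` and
`g' x = p * x ^ (p - 2) * ((2 - p) * (x - 1) + 1)`, which is positive for `x ≥ 1` as soon as
`0 < p ≤ 2`, so `g > 0` on `(1, ∞)`. -/

open Set

namespace Real

variable {p x : ℝ}

lemma hasDerivAt_two_mul_rpow_sub_one_sub (hx : 0 < x) :
    HasDerivAt (fun y => 2 * (y ^ p - 1) - p * (y - 1) * y ^ (p - 1))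
      (p * x ^ (p - 2) * ((2 - p) * (x - 1) + 1)) x := by
  have hpow : HasDerivAt (fun y => y ^ p) (p * x ^ (p - 1)) x :=
    hasDerivAt_rpow_const (Or.inl hx.ne')
  have hpow' : HasDerivAt (fun y => y ^ (p - 1)) ((p - 1) * x ^ (p - 1 - 1)) x :=
    hasDerivAt_rpow_const (Or.inl hx.ne')
  refine (((hpow.sub_const 1).const_mul 2).fun_sub
    ((((hasDerivAt_id' x).sub_const 1).const_mul p).fun_mul hpow')).congr_deriv ?_
  rw [show p - 1 = p - 2 + 1 by ring, rpow_add_one hx.ne', show p - 2 + 1 - 1 = p - 2 by ring]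
  ring

lemma mul_sub_one_mul_rpow_sub_one_lt (hp₀ : 0 < p) (hp₂ : p ≤ 2) (hx : 1 < x) :
    p * (x - 1) * x ^ (p - 1) < 2 * (x ^ p - 1) := by
  have hderiv : ∀ y ∈ Ici (1 : ℝ), HasDerivAt
      (fun y => 2 * (y ^ p - 1) - p * (y - 1) * y ^ (p - 1))
      (p * y ^ (p - 2) * ((2 - p) * (y - 1) + 1)) y :=
    fun y hy => hasDerivAt_two_mul_rpow_sub_one_sub (zero_lt_one.trans_le hy)
  have hmono : StrictMonoOn (fun y => 2 * (y ^ p - 1) - p * (y - 1) * y ^ (p - 1)) (Ici 1) := by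
    refine strictMonoOn_of_deriv_pos (convex_Ici 1)
      (fun y hy => (hderiv y hy).continuousAt.continuousWithinAt) fun y hy => ?_
    rw [interior_Ici] at hy
    rw [(hderiv y (mem_Ici_of_Ioi hy)).deriv]
    have hfactor : 0 < (2 - p) * (y - 1) + 1 := by nlinarith [mem_Ioi.mp hy]
    exact mul_pos (mul_pos hp₀ (rpow_pos_of_pos (zero_lt_one.trans hy) _)) hfactor
  have hlt := hmono self_mem_Ici hx.le hx
  simp only [one_rpow, sub_self, mul_zero, zero_mul] at hlt
  linarith

theorem strictMonoOn_sq_sub_one_div_rpow_sub_one (hp₀ : 0 < p) (hp₂ : p ≤ 2) :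
    StrictMonoOn (fun x : ℝ => (x - 1) ^ 2 / (x ^ p - 1)) (Ioi 1) := by
  have hden : ∀ x ∈ Ioi (1 : ℝ), 0 < x ^ p - 1 := fun x hx => sub_pos.mpr (one_lt_rpow hx hp₀)
  have hderiv : ∀ x ∈ Ioi (1 : ℝ), HasDerivAt (fun x : ℝ => (x - 1) ^ 2 / (x ^ p - 1))
      ((2 * (x - 1) * (x ^ p - 1) - (x - 1) ^ 2 * (p * x ^ (p - 1))) / (x ^ p - 1) ^ 2) x := by
    intro x hx
    have hnum : HasDerivAt (fun x : ℝ => (x - 1) ^ 2) (2 * (x - 1)) x := by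
      simpa using ((hasDerivAt_id' x).sub_const 1).fun_pow 2
    have hpow : HasDerivAt (fun x => x ^ p - 1) (p * x ^ (p - 1)) x :=
      (hasDerivAt_rpow_const (Or.inl (zero_lt_one.trans hx).ne')).sub_const 1
    exact hnum.div hpow (hden x hx).ne'
  refine strictMonoOn_of_deriv_pos (convex_Ioi 1)
    (fun x hx => (hderiv x hx).continuousAt.continuousWithinAt) fun x hx => ?_
  rw [interior_Ioi] at hx
  rw [(hderiv x hx).deriv]
  have hnum : 2 * (x - 1) * (x ^ p - 1) - (x - 1) ^ 2 * (p * x ^ (p - 1)) =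
      (x - 1) * (2 * (x ^ p - 1) - p * (x - 1) * x ^ (p - 1)) := by ring
  rw [hnum]
  exact div_pos
    (mul_pos (sub_pos.mpr hx) (sub_pos.mpr (mul_sub_one_mul_rpow_sub_one_lt hp₀ hp₂ hx)))
    (pow_pos (hden x hx) 2)

end Real

theorem F2_monotone (α : ℝ) (hα : α ∈ Set.Ioo (0 : ℝ) 1) :
    MonotoneOn (fun x : ℝ => (x - 1) ^ 2 / (x ^ (α + 1) - 1)) (Set.Ioi (1 : ℝ)) :=
  (Real.strictMonoOn_sq_sub_one_div_rpow_sub_one (by linarith [hα.1]) (by linarith [hα.2])).monotoneOn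
end

section
/- Let α ∈ (0,1). For real numbers 0 ≤ a ≤ b < c ≤ d with b < c, define Γ(x,y) = (y-x)²/(y^(α+1) - x^(α+1)) for 0 ≤ x < y. Then Γ(b,c) ≤ Γ(a,d). -/
/-! Write `p = α + 1 ∈ (1, 2]`. It suffices that `Γ(·, c)` decreases on `[0, b]` and `Γ(a, ·)`
increases on `[c, ∞)`. The sign of either derivative reduces to
`p y^(p-1) (y - x) ≤ 2 (y^p - x^p)`, which holds because `y^p - x^p ≥ y^(p-1) (y - x)` and `p ≤ 2`. -/

open Set

noncomputable def gammaRatio (p x y : ℝ) : ℝ := (y - x) ^ 2 / (y ^ p - x ^ p)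

namespace Real

variable {p x y : ℝ}

lemma rpow_sub_one_mul_sub_le_rpow_sub_rpow (hp : 1 ≤ p) (hx : 0 ≤ x) (hxy : x ≤ y) :
    y ^ (p - 1) * (y - x) ≤ y ^ p - x ^ p := by
  have hp' : p - 1 + 1 ≠ 0 := by linarith
  have hxp : x ^ p = x ^ (p - 1) * x := by simpa using rpow_add_one' hx hp'
  have hyp : y ^ p = y ^ (p - 1) * y := by simpa using rpow_add_one' (hx.trans hxy) hp'
  have hmono : x ^ (p - 1) ≤ y ^ (p - 1) := rpow_le_rpow hx hxy (by linarith)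
  rw [hxp, hyp]
  nlinarith

lemma mul_rpow_sub_one_mul_sub_le_two_mul (hp₁ : 1 ≤ p) (hp₂ : p ≤ 2) (hx : 0 ≤ x)
    (hxy : x ≤ y) : p * y ^ (p - 1) * (y - x) ≤ 2 * (y ^ p - x ^ p) := by
  have hy : 0 ≤ y ^ (p - 1) * (y - x) :=
    mul_nonneg (rpow_nonneg (hx.trans hxy) _) (sub_nonneg.2 hxy)
  nlinarith [rpow_sub_one_mul_sub_le_rpow_sub_rpow hp₁ hx hxy]

end Real

open Real

section

variable {p : ℝ}

lemma hasDerivAt_gammaRatio_right {a t : ℝ} (hp : 1 ≤ p) (hne : t ^ p - a ^ p ≠ 0) :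
    HasDerivAt (gammaRatio p a)
      ((t - a) * (2 * (t ^ p - a ^ p) - p * t ^ (p - 1) * (t - a)) / (t ^ p - a ^ p) ^ 2) t := by
  have hnum : HasDerivAt (fun t : ℝ => (t - a) ^ 2) (2 * (t - a)) t := by
    simpa using ((hasDerivAt_id t).sub_const a).fun_pow 2
  have hden : HasDerivAt (fun t : ℝ => t ^ p - a ^ p) (p * t ^ (p - 1)) t :=
    (hasDerivAt_rpow_const (Or.inr hp)).sub_const _
  exact (hnum.div hden hne).congr_deriv (by ring)

lemma hasDerivAt_gammaRatio_left {c t : ℝ} (hp : 1 ≤ p) (hne : c ^ p - t ^ p ≠ 0) :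
    HasDerivAt (fun t => gammaRatio p t c)
      ((c - t) * (p * t ^ (p - 1) * (c - t) - 2 * (c ^ p - t ^ p)) / (c ^ p - t ^ p) ^ 2) t := by
  have hnum : HasDerivAt (fun t : ℝ => (c - t) ^ 2) (-(2 * (c - t))) t := by
    simpa using ((hasDerivAt_id t).const_sub c).fun_pow 2
  have hden : HasDerivAt (fun t : ℝ => c ^ p - t ^ p) (-(p * t ^ (p - 1))) t :=
    (hasDerivAt_rpow_const (Or.inr hp)).const_sub _
  exact (hnum.div hden hne).congr_deriv (by ring)

lemma monotoneOn_gammaRatio_right {a c : ℝ} (hp₁ : 1 ≤ p) (hp₂ : p ≤ 2) (ha : 0 ≤ a)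
    (hac : a < c) : MonotoneOn (gammaRatio p a) (Ici c) := by
  have hpos : ∀ t ∈ Ici c, 0 < t ^ p - a ^ p := fun t ht =>
    sub_pos.2 (rpow_lt_rpow ha (hac.trans_le ht) (by linarith))
  have hderiv t (ht : t ∈ Ici c) := hasDerivAt_gammaRatio_right hp₁ (hpos t ht).ne'
  refine monotoneOn_of_hasDerivWithinAt_nonneg (convex_Ici c)
    (fun t ht => (hderiv t ht).continuousAt.continuousWithinAt)
    (fun t ht => (hderiv t (interior_subset ht)).hasDerivWithinAt) fun t ht => ?_
  have hat : a < t := hac.trans_le (interior_subset ht)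
  have hkey := mul_rpow_sub_one_mul_sub_le_two_mul hp₁ hp₂ ha hat.le
  exact div_nonneg (mul_nonneg (sub_nonneg.2 hat.le) (by linarith)) (sq_nonneg _)

lemma antitoneOn_gammaRatio_left {b c : ℝ} (hp₁ : 1 ≤ p) (hp₂ : p ≤ 2) (hbc : b < c) :
    AntitoneOn (fun t => gammaRatio p t c) (Icc 0 b) := by
  have hpos : ∀ t ∈ Icc 0 b, 0 < c ^ p - t ^ p := fun t ht =>
    sub_pos.2 (rpow_lt_rpow ht.1 (ht.2.trans_lt hbc) (by linarith))
  have hderiv t (ht : t ∈ Icc 0 b) := hasDerivAt_gammaRatio_left hp₁ (hpos t ht).ne'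
  refine antitoneOn_of_hasDerivWithinAt_nonpos (convex_Icc 0 b)
    (fun t ht => (hderiv t ht).continuousAt.continuousWithinAt)
    (fun t ht => (hderiv t (interior_subset ht)).hasDerivWithinAt) fun t ht => ?_
  obtain ⟨ht₀, htb⟩ := interior_subset ht
  have htc : t < c := htb.trans_lt hbc
  -- the derivative of `t ↦ t ^ p` is monotone, so the bound at `c` also holds at `t`
  have hslope : p * t ^ (p - 1) * (c - t) ≤ p * c ^ (p - 1) * (c - t) := by gcongr
  have hkey := mul_rpow_sub_one_mul_sub_le_two_mul hp₁ hp₂ ht₀ htc.le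
  exact div_nonpos_of_nonpos_of_nonneg
    (mul_nonpos_of_nonneg_of_nonpos (sub_nonneg.2 htc.le) (by linarith)) (sq_nonneg _)

end

theorem Gamma_monotone (α a b c d : ℝ) (hα : α ∈ Set.Ioo (0 : ℝ) 1)
    (ha : 0 ≤ a) (hab : a ≤ b) (hbc : b < c) (hcd : c ≤ d) :
    (c - b) ^ 2 / (c ^ (α + 1) - b ^ (α + 1)) ≤
      (d - a) ^ 2 / (d ^ (α + 1) - a ^ (α + 1)) := by
  have hp₁ : 1 ≤ α + 1 := by linarith [hα.1]
  have hp₂ : α + 1 ≤ 2 := by linarith [hα.2]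
  calc gammaRatio (α + 1) b c
      ≤ gammaRatio (α + 1) a c :=
        antitoneOn_gammaRatio_left hp₁ hp₂ hbc ⟨ha, hab⟩ ⟨ha.trans hab, le_rfl⟩ hab
    _ ≤ gammaRatio (α + 1) a d :=
        monotoneOn_gammaRatio_right hp₁ hp₂ ha (hab.trans_lt hbc) self_mem_Ici hcd hcd
end

section
/- Let α ∈ (0,1), let μ be the measure x^α dx on (0,∞), and let V : (0,∞) → [0,∞) be locally μ-integrable. If I ⊆ J are bounded subintervals of (0,∞), then (|I|²/μ(I)) ∫_I V dμ ≤ (|J|²/μ(J)) ∫_J V dμ, where |I| denotes the length of I. -/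
open MeasureTheory

noncomputable def besselMeasure (α : ℝ) : Measure ℝ :=
  (volume.restrict (Set.Ioi (0 : ℝ))).withDensity fun x => ENNReal.ofReal (x ^ α)

lemma rpow_integrableOn (α : ℝ) (hα0 : 0 < α) {a b : ℝ} (ha : 0 ≤ a) :
    IntegrableOn (fun x : ℝ => x ^ α) (Set.Ioo a b) volume := by
  apply IntegrableOn.mono_set (t := Set.Icc a b) _ Set.Ioo_subset_Icc_self
  exact (continuousOn_id.rpow_const fun x _ => Or.inr hα0.le).integrableOn_Icc

lemma bessel_Ioo (α : ℝ) (hα0 : 0 < α) {a b : ℝ} (ha : 0 ≤ a) (hab : a < b) :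
    besselMeasure α (Set.Ioo a b) = ENNReal.ofReal (∫ x in a..b, x ^ α) := by
  rw [besselMeasure, withDensity_apply _ measurableSet_Ioo,
    Measure.restrict_restrict measurableSet_Ioo]
  have hsub : Set.Ioo a b ∩ Set.Ioi 0 = Set.Ioo a b := by
    apply Set.inter_eq_left.2
    intro x hx
    exact lt_of_le_of_lt ha hx.1
  rw [hsub, ← ofReal_integral_eq_lintegral_ofReal (rpow_integrableOn α hα0 ha)
    (ae_restrict_of_forall_mem measurableSet_Ioo fun x hx =>
      Real.rpow_nonneg (le_trans ha hx.1.le) α)]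
  rw [intervalIntegral.integral_of_le hab.le, integral_Ioc_eq_integral_Ioo]

lemma interval_rpow_pos (α : ℝ) (hα0 : 0 < α) {a b : ℝ} (ha : 0 ≤ a) (hab : a < b) :
    0 < ∫ x in a..b, x ^ α := by
  apply intervalIntegral.intervalIntegral_pos_of_pos_on
  · rw [intervalIntegrable_iff_integrableOn_Ioo_of_le hab.le]
    exact rpow_integrableOn α hα0 ha
  · intro x hx
    exact Real.rpow_pos_of_pos (lt_of_le_of_lt ha hx.1) α
  · exact hab

lemma key_measure_ineq (α : ℝ) (hα : α ∈ Set.Ioo (0 : ℝ) 1)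
    {a b a' b' : ℝ} (ha' : 0 ≤ a') (h1 : a' ≤ a) (h2 : a < b) (h3 : b ≤ b') :
    (b - a) ^ 2 * ∫ x in a'..b', x ^ α ≤ (b' - a') ^ 2 * ∫ x in a..b, x ^ α := by
  set c : ℝ := (b' - a') / (b - a) with hc
  have hba : (0:ℝ) < b - a := by linarith
  have hc1 : 1 ≤ c := by
    rw [hc, le_div_iff₀ hba]; linarith
  have hc0 : (0:ℝ) < c := lt_of_lt_of_le one_pos hc1
  set d : ℝ := a' - c * a with hd
  have ha1 : c * a + d = a' := by ring
  have hb1 : c * b + d = b' := by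
    have : c * (b - a) = b' - a' := by
      rw [hc]; field_simp
    nlinarith [this]
  have hsub : ∫ x in a'..b', x ^ α = c * ∫ x in a..b, (c * x + d) ^ α := by
    rw [intervalIntegral.integral_comp_mul_add (fun x => x ^ α) (ne_of_gt hc0) d, ha1, hb1,
      smul_eq_mul, ← mul_assoc, mul_inv_cancel₀ (ne_of_gt hc0), one_mul]
  have hmono : ∫ x in a..b, (c * x + d) ^ α ≤ ∫ x in a..b, c * x ^ α := by
    apply intervalIntegral.integral_mono_on h2.le
    · rw [intervalIntegrable_iff_integrableOn_Ioo_of_le h2.le]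
      have : (fun x : ℝ => (c * x + d) ^ α) = (fun y : ℝ => y ^ α) ∘ (fun x => c * x + d) := rfl
      rw [this]
      apply IntegrableOn.mono_set (t := Set.Icc a b) _ Set.Ioo_subset_Icc_self
      apply ContinuousOn.integrableOn_Icc
      apply ContinuousOn.rpow_const
      · fun_prop
      · intro x _; exact Or.inr hα.1.le
    · rw [intervalIntegrable_iff_integrableOn_Ioo_of_le h2.le]
      exact (rpow_integrableOn α hα.1 (le_trans ha' h1)).const_mul c
    · intro x hx
      have hx0 : 0 ≤ x := le_trans (le_trans ha' h1) hx.1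
      have h1' : c * x + d ≤ c * x := by
        have : a' ≤ c * a := le_trans h1 (le_mul_of_one_le_left (le_trans ha' h1) hc1)
        simp only [hd]; linarith
      have h0' : 0 ≤ c * x + d := by
        have : c * a + d ≤ c * x + d := by nlinarith [hx.1]
        linarith [ha1 ▸ this, ha']
      calc (c * x + d) ^ α ≤ (c * x) ^ α := Real.rpow_le_rpow h0' h1' hα.1.le
        _ = c ^ α * x ^ α := Real.mul_rpow hc0.le hx0
        _ ≤ c * x ^ α := by
            apply mul_le_mul_of_nonneg_right _ (Real.rpow_nonneg hx0 α)
            calc c ^ α ≤ c ^ (1:ℝ) := Real.rpow_le_rpow_of_exponent_le hc1 hα.2.le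
              _ = c := Real.rpow_one c
  have hci : ∫ x in a..b, c * x ^ α = c * ∫ x in a..b, x ^ α := by
    exact intervalIntegral.integral_const_mul c _
  have hc2 : (b - a) ^ 2 * c ^ 2 = (b' - a') ^ 2 := by
    rw [hc]; field_simp
  calc (b - a) ^ 2 * ∫ x in a'..b', x ^ α
      = (b - a) ^ 2 * (c * ∫ x in a..b, (c * x + d) ^ α) := by rw [hsub]
    _ ≤ (b - a) ^ 2 * (c * (c * ∫ x in a..b, x ^ α)) := by
        apply mul_le_mul_of_nonneg_left _ (sq_nonneg _)
        apply mul_le_mul_of_nonneg_left _ hc0.le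
        rw [← hci]; exact hmono
    _ = (b' - a') ^ 2 * ∫ x in a..b, x ^ α := by rw [← hc2]; ring
  
theorem interval_enlargement (α : ℝ) (hα : α ∈ Set.Ioo (0 : ℝ) 1)
    (V : ℝ → ℝ) (hV : ∀ x, 0 ≤ V x)
    (hVloc : LocallyIntegrable V (besselMeasure α))
    (a b a' b' : ℝ) (ha' : 0 ≤ a') (h1 : a' ≤ a) (h2 : a < b) (h3 : b ≤ b') :
    (b - a) ^ 2 / ((besselMeasure α) (Set.Ioo a b)).toReal *
        ∫ x in Set.Ioo a b, V x ∂(besselMeasure α) ≤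
      (b' - a') ^ 2 / ((besselMeasure α) (Set.Ioo a' b')).toReal *
        ∫ x in Set.Ioo a' b', V x ∂(besselMeasure α) := by
  have ha : 0 ≤ a := le_trans ha' h1
  have h2' : a' < b' := lt_of_le_of_lt h1 (lt_of_lt_of_le h2 h3)
  have hmI : ((besselMeasure α) (Set.Ioo a b)).toReal = ∫ x in a..b, x ^ α := by
    rw [bessel_Ioo α hα.1 ha h2, ENNReal.toReal_ofReal (interval_rpow_pos α hα.1 ha h2).le]
  have hmJ : ((besselMeasure α) (Set.Ioo a' b')).toReal = ∫ x in a'..b', x ^ α := by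
    rw [bessel_Ioo α hα.1 ha' h2', ENNReal.toReal_ofReal (interval_rpow_pos α hα.1 ha' h2').le]
  have hmIpos : 0 < ∫ x in a..b, x ^ α := interval_rpow_pos α hα.1 ha h2
  have hmJpos : 0 < ∫ x in a'..b', x ^ α := interval_rpow_pos α hα.1 ha' h2'
  rw [hmI, hmJ]
  have hratio : (b - a) ^ 2 / (∫ x in a..b, x ^ α) ≤ (b' - a') ^ 2 / (∫ x in a'..b', x ^ α) := by
    rw [div_le_div_iff₀ hmIpos hmJpos]
    exact key_measure_ineq α hα ha' h1 h2 h3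
  have hint : ∫ x in Set.Ioo a b, V x ∂(besselMeasure α) ≤
      ∫ x in Set.Ioo a' b', V x ∂(besselMeasure α) := by
    apply setIntegral_mono_set
    · exact (hVloc.integrableOn_isCompact isCompact_Icc).mono_set Set.Ioo_subset_Icc_self
    · exact Filter.Eventually.of_forall fun x => hV x
    · exact Filter.Eventually.of_forall (Set.Ioo_subset_Ioo h1 h3)
  have hnn : 0 ≤ ∫ x in Set.Ioo a b, V x ∂(besselMeasure α) :=
    setIntegral_nonneg measurableSet_Ioo fun x _ => hV x
  calc (b - a) ^ 2 / (∫ x in a..b, x ^ α) * ∫ x in Set.Ioo a b, V x ∂(besselMeasure α)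
      ≤ (b' - a') ^ 2 / (∫ x in a'..b', x ^ α) * ∫ x in Set.Ioo a b, V x ∂(besselMeasure α) :=
        mul_le_mul_of_nonneg_right hratio hnn
    _ ≤ (b' - a') ^ 2 / (∫ x in a'..b', x ^ α) * ∫ x in Set.Ioo a' b', V x ∂(besselMeasure α) := by
        apply mul_le_mul_of_nonneg_left hint
        positivity
end

section
/- Let α ∈ (0,1) and let μ be the measure x^α dx on (0,∞). For any interval I = (a,b) with 0 ≤ a < b, the quantity |I|²/μ(I) is comparable to b^(1-α) - a^(1-α), with constants depending only on α. -/
open MeasureTheory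

lemma besselMeasure_Ioo (α : ℝ) (hα : 0 < α) {a b : ℝ} (ha : 0 ≤ a) (hab : a < b) :
    (besselMeasure α) (Set.Ioo a b) = ENNReal.ofReal ((b ^ (α + 1) - a ^ (α + 1)) / (α + 1)) := by
  have hsub : Set.Ioo a b ∩ Set.Ioi 0 = Set.Ioo a b :=
    Set.inter_eq_left.mpr fun x hx => lt_of_le_of_lt ha hx.1
  rw [besselMeasure, withDensity_apply _ measurableSet_Ioo,
    Measure.restrict_restrict measurableSet_Ioo, hsub]
  have hint : IntervalIntegrable (fun x : ℝ => x ^ α) volume a b :=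
    intervalIntegral.intervalIntegrable_rpow (Or.inl hα.le)
  have hIoo : IntegrableOn (fun x : ℝ => x ^ α) (Set.Ioo a b) volume := by
    have := (intervalIntegrable_iff_integrableOn_Ioc_of_le hab.le).mp hint
    exact this.mono_set Set.Ioo_subset_Ioc_self
  have hnn : 0 ≤ᵐ[volume.restrict (Set.Ioo a b)] fun x : ℝ => x ^ α := by
    filter_upwards [ae_restrict_mem measurableSet_Ioo] with x hx
    exact Real.rpow_nonneg (le_of_lt (lt_of_le_of_lt ha hx.1)) α
  rw [← ofReal_integral_eq_lintegral_ofReal hIoo hnn]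
  congr 1
  rw [← MeasureTheory.integral_Ioc_eq_integral_Ioo, ← intervalIntegral.integral_of_le hab.le]
  exact integral_rpow (Or.inl (by linarith))

lemma prod_bounds (α : ℝ) (hα : α ∈ Set.Ioo (0 : ℝ) 1) {a b : ℝ} (ha : 0 ≤ a) (hab : a < b) :
    (1 - α) * (b - a) ^ 2 ≤ (b ^ (1 - α) - a ^ (1 - α)) * (b ^ (1 + α) - a ^ (1 + α)) ∧
    (b ^ (1 - α) - a ^ (1 - α)) * (b ^ (1 + α) - a ^ (1 + α)) ≤ (1 + α) * (b - a) ^ 2 := by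
  obtain ⟨hα0, hα1⟩ := hα
  have hb : 0 < b := lt_of_le_of_lt ha hab
  set t : ℝ := a / b with ht_def
  have ht0 : 0 ≤ t := div_nonneg ha hb.le
  have ht1 : t < 1 := (div_lt_one hb).mpr hab
  have ha_eq : a = t * b := (div_mul_cancel₀ a hb.ne').symm
  have hE : b ^ (1 - α) - a ^ (1 - α) = b ^ (1 - α) * (1 - t ^ (1 - α)) := by
    rw [ha_eq, Real.mul_rpow ht0 hb.le]; ring
  have hD : b ^ (1 + α) - a ^ (1 + α) = b ^ (1 + α) * (1 - t ^ (1 + α)) := by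
    rw [ha_eq, Real.mul_rpow ht0 hb.le]; ring
  have hbb : b ^ (1 - α) * b ^ (1 + α) = b ^ 2 := by
    rw [← Real.rpow_natCast b 2, ← Real.rpow_add hb]; norm_num
  have hba : (b - a) ^ 2 = b ^ 2 * (1 - t) ^ 2 := by
    rw [ha_eq]; ring
  -- pointwise bounds on [0,1)
  have h2 : t ≤ t ^ (1 - α) := by
    rcases eq_or_lt_of_le ht0 with h | h
    · rw [← h, Real.zero_rpow (by linarith)]
    · calc t = t ^ (1 : ℝ) := (Real.rpow_one t).symm
        _ ≤ t ^ (1 - α) := Real.rpow_le_rpow_of_exponent_ge h ht1.le (by linarith)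
  have h3 : t ^ (1 + α) ≤ t := by
    rcases eq_or_lt_of_le ht0 with h | h
    · rw [← h, Real.zero_rpow (by linarith)]
    · calc t ^ (1 + α) ≤ t ^ (1 : ℝ) :=
            Real.rpow_le_rpow_of_exponent_ge h ht1.le (by linarith)
        _ = t := Real.rpow_one t
  have h4 : (1 - α) * (1 - t) ≤ 1 - t ^ (1 - α) := by
    have := rpow_one_add_le_one_add_mul_self (s := t - 1) (p := 1 - α)
      (by linarith) (by linarith) (by linarith)
    rw [show (1 : ℝ) + (t - 1) = t by ring] at this
    nlinarith
  have h5 : 1 - t ^ (1 + α) ≤ (1 + α) * (1 - t) := by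
    have := one_add_mul_self_le_rpow_one_add (s := t - 1) (p := 1 + α)
      (by linarith) (by linarith)
    rw [show (1 : ℝ) + (t - 1) = t by ring] at this
    nlinarith
  have hEn : 0 ≤ 1 - t ^ (1 - α) := by
    have : t ^ (1 - α) ≤ 1 := Real.rpow_le_one ht0 ht1.le (by linarith)
    linarith
  have hDn : 0 ≤ 1 - t ^ (1 + α) := by
    have : t ^ (1 + α) ≤ 1 := Real.rpow_le_one ht0 ht1.le (by linarith)
    linarith
  have hb2 : (0 : ℝ) ≤ b ^ 2 := sq_nonneg b
  have htn : 0 ≤ 1 - t := by linarith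
  constructor
  · rw [hE, hD, hba]
    have key : (1 - α) * (1 - t) ^ 2 ≤ (1 - t ^ (1 - α)) * (1 - t ^ (1 + α)) := by
      nlinarith [mul_le_mul h4 (by linarith : 1 - t ≤ 1 - t ^ (1 + α))
        htn (by linarith : 0 ≤ 1 - t ^ (1 - α))]
    calc (1 - α) * (b ^ 2 * (1 - t) ^ 2) = b ^ 2 * ((1 - α) * (1 - t) ^ 2) := by ring
      _ ≤ b ^ 2 * ((1 - t ^ (1 - α)) * (1 - t ^ (1 + α))) := by
          exact mul_le_mul_of_nonneg_left key hb2
      _ = b ^ (1 - α) * (1 - t ^ (1 - α)) * (b ^ (1 + α) * (1 - t ^ (1 + α))) := by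
          rw [← hbb]; ring
  · rw [hE, hD, hba]
    have key : (1 - t ^ (1 - α)) * (1 - t ^ (1 + α)) ≤ (1 + α) * (1 - t) ^ 2 := by
      nlinarith [mul_le_mul (by linarith : 1 - t ^ (1 - α) ≤ 1 - t) h5 hDn htn]
    calc b ^ (1 - α) * (1 - t ^ (1 - α)) * (b ^ (1 + α) * (1 - t ^ (1 + α)))
        = b ^ 2 * ((1 - t ^ (1 - α)) * (1 - t ^ (1 + α))) := by rw [← hbb]; ring
      _ ≤ b ^ 2 * ((1 + α) * (1 - t) ^ 2) := mul_le_mul_of_nonneg_left key hb2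
      _ = (1 + α) * (b ^ 2 * (1 - t) ^ 2) := by ring

theorem length_sq_over_measure_comparable (α : ℝ) (hα : α ∈ Set.Ioo (0 : ℝ) 1) :
    ∃ C > (0 : ℝ), ∀ a b : ℝ, 0 ≤ a → a < b →
      C⁻¹ * (b ^ (1 - α) - a ^ (1 - α)) ≤
          (b - a) ^ 2 / ((besselMeasure α) (Set.Ioo a b)).toReal ∧
      (b - a) ^ 2 / ((besselMeasure α) (Set.Ioo a b)).toReal ≤
          C * (b ^ (1 - α) - a ^ (1 - α)) := by
  obtain ⟨hα0, hα1⟩ := hα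
  refine ⟨(1 + α) / (1 - α), div_pos (by linarith) (by linarith), fun a b ha hab => ?_⟩
  have hb : 0 < b := lt_of_le_of_lt ha hab
  have hlt : a ^ (α + 1) < b ^ (α + 1) :=
    Real.rpow_lt_rpow ha hab (by linarith)
  have hMval : ((besselMeasure α) (Set.Ioo a b)).toReal
      = (b ^ (α + 1) - a ^ (α + 1)) / (α + 1) := by
    rw [besselMeasure_Ioo α hα0 ha hab, ENNReal.toReal_ofReal]
    exact div_nonneg (by linarith) (by linarith)
  set M := ((besselMeasure α) (Set.Ioo a b)).toReal with hM_def
  have hMpos : 0 < M := by rw [hMval]; exact div_pos (by linarith) (by linarith)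
  obtain ⟨hlow, hhigh⟩ := prod_bounds α ⟨hα0, hα1⟩ ha hab
  have hEnn : 0 ≤ b ^ (1 - α) - a ^ (1 - α) := by
    have := Real.rpow_le_rpow ha hab.le (by linarith : (0:ℝ) ≤ 1 - α)
    linarith
  have hcomm : a ^ (α + 1) = a ^ (1 + α) := by rw [add_comm]
  have hcomm' : b ^ (α + 1) = b ^ (1 + α) := by rw [add_comm]
  have hMD : M * (1 + α) = b ^ (1 + α) - a ^ (1 + α) := by
    rw [hMval, hcomm, hcomm']
    rw [add_comm 1 α, div_mul_cancel₀ _ (by linarith : α + 1 ≠ 0)]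
  constructor
  · rw [le_div_iff₀ hMpos]
    have hC1 : ((1 + α) / (1 - α))⁻¹ ≤ 1 := by
      apply inv_le_one_of_one_le₀
      rw [le_div_iff₀ (by linarith)]
      linarith
    have h1 : ((1 + α) / (1 - α))⁻¹ * (b ^ (1 - α) - a ^ (1 - α)) * M
        ≤ (b ^ (1 - α) - a ^ (1 - α)) * M := by
      apply mul_le_mul_of_nonneg_right _ hMpos.le
      nlinarith
    refine h1.trans ?_
    have h2 : (b ^ (1 - α) - a ^ (1 - α)) * (M * (1 + α)) ≤ (1 + α) * (b - a) ^ 2 := by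
      rw [hMD]; exact hhigh
    nlinarith
  · rw [div_le_iff₀ hMpos]
    have h2 : (1 - α) * (b - a) ^ 2 ≤ (b ^ (1 - α) - a ^ (1 - α)) * (M * (1 + α)) := by
      rw [hMD]; exact hlow
    have hden : 0 < 1 - α := by linarith
    rw [div_mul_eq_mul_div, div_mul_eq_mul_div, le_div_iff₀ hden]
    nlinarith
end

section
/- Let α ∈ (0,1). For every z > 0 and R > 0 with z^(1-α) ≥ 2R, the Lebesgue measure of the set {x > 0 : |x^(1-α) - z^(1-α)| < R} is at most C R z^α, where C depends only on α. -/
set_option maxHeartbeats 1000000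


open MeasureTheory

lemma rpow_sub_rpow_le_aux {p x y : ℝ} (hp : 1 ≤ p) (hy : 0 < y) (hxy : y ≤ x) :
    x ^ p - y ^ p ≤ p * x ^ (p - 1) * (x - y) := by
  rcases eq_or_lt_of_le hxy with rfl | h
  · simp
  · obtain ⟨c, hc, hc'⟩ := exists_hasDerivAt_eq_slope (fun t => t ^ p)
      (fun t => p * t ^ (p - 1)) h
      (ContinuousOn.rpow_const continuousOn_id (fun t _ => Or.inr (by linarith)))
      (fun t _ => Real.hasDerivAt_rpow_const (Or.inr hp))
    have hc0 : 0 < c := lt_trans hy hc.1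
    have : (x ^ p - y ^ p) / (x - y) = p * c ^ (p - 1) := hc'.symm
    have hxyp : 0 < x - y := by linarith
    have h2 : x ^ p - y ^ p = p * c ^ (p - 1) * (x - y) := by
      field_simp at this; linarith [this]
    rw [h2]
    have hcx : c ^ (p - 1) ≤ x ^ (p - 1) :=
      Real.rpow_le_rpow hc0.le hc.2.le (by linarith)
    have hp0 : (0:ℝ) < p := by linarith
    have := mul_le_mul_of_nonneg_left hcx hp0.le
    exact mul_le_mul_of_nonneg_right this hxyp.le

theorem level_set_measure_large_z (α : ℝ) (hα : α ∈ Set.Ioo (0 : ℝ) 1) :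
    ∃ C > (0 : ℝ), ∀ z R : ℝ, 0 < z → 0 < R → 2 * R ≤ z ^ (1 - α) →
      (volume {x : ℝ | 0 < x ∧ |x ^ (1 - α) - z ^ (1 - α)| < R}).toReal ≤
        C * R * z ^ α := by
  obtain ⟨hα0, hα1⟩ := hα
  set β := 1 - α with hβdef
  have hβ : 0 < β := by simp [hβdef]; linarith
  have hβ1 : β ≤ 1 := by simp [hβdef]; linarith
  set p := β⁻¹ with hpdef
  have hp1 : 1 ≤ p := one_le_inv_iff₀.mpr ⟨hβ, hβ1⟩
  have hp0 : 0 < p := by linarith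
  refine ⟨2 * p * (3/2) ^ (p - 1), by positivity, fun z R hz hR hzR => ?_⟩
  set u := z ^ β with hudef
  have hu0 : 0 < u := Real.rpow_pos_of_pos hz β
  have huR : R ≤ u - R := by linarith
  have haR : 0 < u - R := by linarith
  set a := (u - R) ^ p with hadef
  set b := (u + R) ^ p with hbdef
  have hsub : {x : ℝ | 0 < x ∧ |x ^ β - u| < R} ⊆ Set.Ioo a b := by
    rintro x ⟨hx, habs⟩
    rw [abs_lt] at habs
    have hxid : (x ^ β) ^ p = x := Real.rpow_rpow_inv hx.le hβ.ne'
    constructor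
    · calc a < (x ^ β) ^ p := Real.rpow_lt_rpow haR.le (by linarith) hp0
        _ = x := hxid
    · calc x = (x ^ β) ^ p := hxid.symm
        _ < b := Real.rpow_lt_rpow (Real.rpow_nonneg hx.le β) (by linarith) hp0
  have hab : a ≤ b := Real.rpow_le_rpow haR.le (by linarith) hp0.le
  have hvol : (volume {x : ℝ | 0 < x ∧ |x ^ β - u| < R}).toReal ≤ b - a := by
    have h1 : volume {x : ℝ | 0 < x ∧ |x ^ β - u| < R} ≤ volume (Set.Ioo a b) :=
      measure_mono hsub
    rw [Real.volume_Ioo] at h1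
    calc (volume {x : ℝ | 0 < x ∧ |x ^ β - u| < R}).toReal
        ≤ (ENNReal.ofReal (b - a)).toReal := ENNReal.toReal_mono ENNReal.ofReal_ne_top h1
      _ ≤ b - a := (ENNReal.toReal_ofReal (by linarith)).le
  refine hvol.trans ?_
  -- b - a ≤ p * (u+R)^(p-1) * (2R)
  have hmvt : b - a ≤ p * (u + R) ^ (p - 1) * (2 * R) := by
    have := rpow_sub_rpow_le_aux hp1 haR (by linarith : u - R ≤ u + R)
    calc b - a ≤ p * (u + R) ^ (p - 1) * ((u + R) - (u - R)) := this
      _ = p * (u + R) ^ (p - 1) * (2 * R) := by ring_nf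
  refine hmvt.trans ?_
  have hkey : (u + R) ^ (p - 1) ≤ (3/2) ^ (p - 1) * z ^ α := by
    have h1 : u + R ≤ 3/2 * u := by linarith
    have h2 : (u + R) ^ (p - 1) ≤ (3/2 * u) ^ (p - 1) :=
      Real.rpow_le_rpow (by linarith) h1 (by linarith)
    have h3 : (3/2 * u) ^ (p - 1) = (3/2) ^ (p - 1) * u ^ (p - 1) :=
      Real.mul_rpow (by norm_num) hu0.le
    have h4 : u ^ (p - 1) = z ^ α := by
      rw [hudef, ← Real.rpow_mul hz.le]
      congr 1
      have h : β * p = 1 := mul_inv_cancel₀ hβ.ne'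
      nlinarith [h]
    exact (h2.trans_eq h3).trans_eq (by rw [h4])
  calc p * (u + R) ^ (p - 1) * (2 * R)
      ≤ p * ((3/2) ^ (p - 1) * z ^ α) * (2 * R) :=
        mul_le_mul_of_nonneg_right (mul_le_mul_of_nonneg_left hkey hp0.le)
          (by linarith)
    _ = 2 * p * (3/2) ^ (p - 1) * R * z ^ α := by ring
end

section
/- Let τ > 0, I = [c_I - τ/2, c_I + τ/2] ⊆ (0,∞) an interval of length τ, and suppose a kernel P_t(x,y) on (0,∞) satisfies 0 ≤ P_t(x,y) ≤ C μ(B(x,√t))⁻¹ exp(-|x-y|²/(c t)), where μ is the measure x^α dx, α > 0. If a is supported in I with ∫ a dμ = 0 and also P_t(x,·) is Lipschitz in the sense |∂_x P_t(x,y)| ≤ C t^(-1/2) μ(B(x,√t))⁻¹ exp(-|x-y|²/(ct)), then ∫_{|x - c_I| ≥ 2τ} sup_{t ≥ τ²} |∫ P_t(x,y) a(y) dμ(y)| dμ(x) ≤ C' ‖a‖_{L¹(μ)}, with C' depending only on α, C, c. -/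
/-!
Since `a` has mean zero, `∫ P_t(x,y) a(y) dμ(y) = ∫ (P_t(x,y) - P_t(x,c_I)) a(y) dμ(y)`, and by the
mean value theorem the difference is at most `τ/2` times
`sup_{u ∈ I} C t^{-1/2} μ(B(u,√t))⁻¹ exp(-(u-x)²/(ct))`. The ball contains `(u + √t/2, u + √t)`,
so `μ(B(u,√t)) ≥ (√t/2) (u + √t/2)^α`; replacing `(u + √t/2)^α` by `x^α` costs a factor
`exp(2α|u-x|/√t)`, which the Gaussian absorbs. What is left is
`≲ x^{-α} |u-x|^{-2} ≲ x^{-α} (τ² + (x-c_I)²)⁻¹` uniformly in `t`, and integrating against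
`x^α dx` gives `π/τ`, which cancels the factor `τ`.
-/

open MeasureTheory

open Set Real

theorem sq_mul_exp_sub_le {A c : ℝ} (hc : 0 < c) (w : ℝ) :
    w ^ 2 * exp (A * w - w ^ 2 / c) ≤ 2 * c * exp (c * A ^ 2 / 2) := by
  have hsplit : A * w - w ^ 2 / c ≤ c * A ^ 2 / 2 + -(w ^ 2 / (2 * c)) := by
    have hsq : 0 ≤ (w - c * A) ^ 2 / (2 * c) := by positivity
    have hid : (w - c * A) ^ 2 / (2 * c) =
        c * A ^ 2 / 2 + -(w ^ 2 / (2 * c)) - (A * w - w ^ 2 / c) := by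
      field_simp; ring
    linarith
  have hdecay : w ^ 2 * exp (-(w ^ 2 / (2 * c))) ≤ 2 * c := by
    have hmax := mul_exp_neg_le_exp_neg_one (w ^ 2 / (2 * c))
    have hexp : exp (-1) ≤ 1 := exp_le_one_iff.2 (by norm_num)
    calc w ^ 2 * exp (-(w ^ 2 / (2 * c)))
        = 2 * c * (w ^ 2 / (2 * c) * exp (-(w ^ 2 / (2 * c)))) := by field_simp
      _ ≤ 2 * c * 1 := by gcongr; linarith
      _ = 2 * c := mul_one _
  calc w ^ 2 * exp (A * w - w ^ 2 / c)
      ≤ w ^ 2 * (exp (c * A ^ 2 / 2) * exp (-(w ^ 2 / (2 * c)))) := by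
        rw [← exp_add]; gcongr
    _ = exp (c * A ^ 2 / 2) * (w ^ 2 * exp (-(w ^ 2 / (2 * c)))) := by ring
    _ ≤ exp (c * A ^ 2 / 2) * (2 * c) := by gcongr
    _ = 2 * c * exp (c * A ^ 2 / 2) := mul_comm _ _

theorem sq_add_sq_le_four_mul_sq_sub {u x cI τ : ℝ} (hτ : 0 < τ) (hu : |u - cI| ≤ τ / 2)
    (hx : 2 * τ ≤ |x - cI|) : τ ^ 2 + (x - cI) ^ 2 ≤ 4 * (u - x) ^ 2 := by
  have htri : |x - cI| ≤ |u - x| + |u - cI| := by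
    rw [abs_sub_comm u x]; exact abs_sub_le x u cI
  rw [← sq_abs (x - cI), ← sq_abs (u - x)]
  nlinarith [abs_nonneg (u - x)]

theorem integrable_inv_sq_add_sq_sub (c : ℝ) {τ : ℝ} (hτ : τ ≠ 0) :
    Integrable fun x => (τ ^ 2 + (x - c) ^ 2)⁻¹ := by
  have hscale : (fun x => (τ ^ 2 + (x - c) ^ 2)⁻¹) =
      fun x => (τ ^ 2)⁻¹ * (1 + ((x - c) / τ) ^ 2)⁻¹ := by
    ext x; field_simp
  rw [hscale]
  exact ((integrable_inv_one_add_sq.comp_div hτ).comp_sub_right c).const_mul _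

theorem integral_inv_sq_add_sq_sub (c : ℝ) {τ : ℝ} (hτ : 0 < τ) :
    ∫ x, (τ ^ 2 + (x - c) ^ 2)⁻¹ = π / τ := by
  have hscale : (fun x => (τ ^ 2 + (x - c) ^ 2)⁻¹) =
      fun x => (τ ^ 2)⁻¹ * (1 + ((x - c) / τ) ^ 2)⁻¹ := by
    ext x; field_simp
  rw [hscale, integral_const_mul, integral_sub_right_eq_self (fun y => (1 + (y / τ) ^ 2)⁻¹) c,
    Measure.integral_comp_div (fun y => (1 + y ^ 2)⁻¹) τ, integral_univ_inv_one_add_sq,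
    abs_of_pos hτ, smul_eq_mul]
  field_simp

theorem abs_integral_mul_le_of_integral_eq_zero {X : Type*} [MeasurableSpace X] {ν : Measure X}
    {f a : X → ℝ} {s : Set X} {x₀ : X} {M : ℝ} (hf : AEStronglyMeasurable f ν)
    (ha : Integrable a ν) (hzero : ∫ y, a y ∂ν = 0) (hsupp : ∀ y ∉ s, a y = 0)
    (hfs : ∀ y ∈ s, |f y - f x₀| ≤ M) :
    |∫ y, f y * a y ∂ν| ≤ M * ∫ y, |a y| ∂ν := by
  have hbound : ∀ y, ‖(f y - f x₀) * a y‖ ≤ M * |a y| := by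
    intro y
    by_cases hy : y ∈ s
    · rw [norm_mul, norm_eq_abs, norm_eq_abs]
      exact mul_le_mul_of_nonneg_right (hfs y hy) (abs_nonneg _)
    · simp [hsupp y hy]
  have hdiff : Integrable (fun y => (f y - f x₀) * a y) ν :=
    (ha.abs.const_mul M).mono' ((hf.sub aestronglyMeasurable_const).mul ha.aestronglyMeasurable)
      (ae_of_all _ hbound)
  have hcancel : ∫ y, f y * a y ∂ν = ∫ y, (f y - f x₀) * a y ∂ν := by
    have hsplit : (fun y => f y * a y) = fun y => (f y - f x₀) * a y + f x₀ * a y := by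
      ext y; ring
    rw [hsplit, integral_add hdiff (ha.const_mul _), integral_const_mul, hzero, mul_zero,
      add_zero]
  calc |∫ y, f y * a y ∂ν| = ‖∫ y, (f y - f x₀) * a y ∂ν‖ := by rw [hcancel, norm_eq_abs]
    _ ≤ ∫ y, M * |a y| ∂ν :=
        norm_integral_le_of_norm_le (ha.abs.const_mul M) (ae_of_all _ hbound)
    _ = M * ∫ y, |a y| ∂ν := integral_const_mul _ _

theorem inv_toReal_le_inv_of_ofReal_le {m : ENNReal} {v : ℝ} (hv : 0 < v)
    (h : ENNReal.ofReal v ≤ m) : m.toReal⁻¹ ≤ v⁻¹ := by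
  rcases eq_or_ne m ⊤ with rfl | hm
  · simpa using hv.le
  · exact inv_anti₀ hv ((ENNReal.ofReal_le_iff_le_toReal hm).1 h)

theorem besselMeasure_restrict {α : ℝ} {s : Set ℝ} (hs : MeasurableSet s) (hs0 : s ⊆ Ioi 0) :
    (besselMeasure α).restrict s =
      (volume.restrict s).withDensity fun x => ENNReal.ofReal (x ^ α) := by
  rw [besselMeasure, restrict_withDensity hs, Measure.restrict_restrict hs, inter_eq_left.2 hs0]

theorem besselMeasure_restrict_Ioi (α : ℝ) :
    (besselMeasure α).restrict (Ioi 0) = besselMeasure α :=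
  besselMeasure_restrict measurableSet_Ioi subset_rfl

theorem setIntegral_besselMeasure {α : ℝ} {s : Set ℝ} (hs : MeasurableSet s) (hs0 : s ⊆ Ioi 0)
    (f : ℝ → ℝ) : ∫ x in s, f x ∂besselMeasure α = ∫ x in s, x ^ α * f x := by
  rw [besselMeasure_restrict hs hs0]
  have hdensity := integral_withDensity_eq_integral_smul (μ := volume.restrict s)
    (f := fun x => (x ^ α).toNNReal) (measurable_id.pow_const α).real_toNNReal f
  refine hdensity.trans (setIntegral_congr_fun hs fun x hx => ?_)
  rw [NNReal.smul_def, smul_eq_mul, coe_toNNReal _ (rpow_nonneg (hs0 hx).le α)]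

theorem integrableOn_besselMeasure_iff {α : ℝ} {s : Set ℝ} (hs : MeasurableSet s)
    (hs0 : s ⊆ Ioi 0) {f : ℝ → ℝ} :
    IntegrableOn f s (besselMeasure α) ↔ IntegrableOn (fun x => x ^ α * f x) s := by
  rw [IntegrableOn, besselMeasure_restrict hs hs0]
  have hdensity := integrable_withDensity_iff_integrable_smul (μ := volume.restrict s)
    (f := fun x => (x ^ α).toNNReal) (measurable_id.pow_const α).real_toNNReal (g := f)
  refine hdensity.trans (integrableOn_congr_fun (fun x hx => ?_) hs)
  rw [NNReal.smul_def, smul_eq_mul, coe_toNNReal _ (rpow_nonneg (hs0 hx).le α)]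

theorem ofReal_le_besselMeasure_ball_inter_Ioi {α u s : ℝ} (hα : 0 ≤ α) (hu : 0 ≤ u)
    (hs : 0 < s) :
    ENNReal.ofReal (s / 2 * (u + s / 2) ^ α) ≤ besselMeasure α (Metric.ball u s ∩ Ioi 0) := by
  have hsub : Ioo (u + s / 2) (u + s) ⊆ Metric.ball u s ∩ Ioi 0 := fun y hy =>
    ⟨by rw [Real.ball_eq_Ioo]; constructor <;> linarith [hy.1, hy.2], by
      show 0 < y; linarith [hy.1]⟩
  calc ENNReal.ofReal (s / 2 * (u + s / 2) ^ α)
      = ∫⁻ _ in Ioo (u + s / 2) (u + s), ENNReal.ofReal ((u + s / 2) ^ α) := by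
        rw [setLIntegral_const, Real.volume_Ioo, ← ENNReal.ofReal_mul (by positivity)]
        ring_nf
    _ ≤ ∫⁻ y in Ioo (u + s / 2) (u + s), ENNReal.ofReal (y ^ α) :=
        setLIntegral_mono' measurableSet_Ioo fun y hy =>
          ENNReal.ofReal_le_ofReal (rpow_le_rpow (by positivity) hy.1.le hα)
    _ = (besselMeasure α).restrict (Ioo (u + s / 2) (u + s)) univ := by
        rw [besselMeasure_restrict measurableSet_Ioo (hsub.trans inter_subset_right),
          withDensity_apply _ MeasurableSet.univ, Measure.restrict_univ]
    _ ≤ besselMeasure α (Metric.ball u s ∩ Ioi 0) := by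
        rw [Measure.restrict_apply_univ]; exact measure_mono hsub

theorem rpow_neg_half_mul_inv_besselMeasure_ball_mul_exp_le {α c u x t : ℝ} (hα : 0 ≤ α)
    (hc : 0 < c) (hu : 0 < u) (hx : 0 < x) (hux : u ≠ x) (ht : 0 < t) :
    t ^ (-(1 / 2) : ℝ) * ((besselMeasure α) (Metric.ball u (√t) ∩ Ioi 0)).toReal⁻¹ *
        exp (-(u - x) ^ 2 / (c * t)) ≤
      4 * c * exp (2 * c * α ^ 2) * (x ^ α)⁻¹ * ((u - x) ^ 2)⁻¹ := by
  have ht_eq : t = √t ^ 2 := (sq_sqrt ht.le).symm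
  have hrpow : t ^ (-(1 / 2) : ℝ) = (√t)⁻¹ := by rw [rpow_neg ht.le, sqrt_eq_rpow]
  set s := √t
  have hs : 0 < s := sqrt_pos.2 ht
  set w := |u - x| / s with hw_def
  have hw : 0 ≤ w := by positivity
  have hV := inv_toReal_le_inv_of_ofReal_le (by positivity)
    (ofReal_le_besselMeasure_ball_inter_Ioi hα hu.le hs)
  have hcompare : x ^ α ≤ (u + s / 2) ^ α * exp (2 * α * w) := by
    have hx_le : x ≤ (u + s / 2) * (1 + 2 * w) := by
      have : |u - x| = w * s := by rw [hw_def]; field_simp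
      nlinarith [neg_abs_le (u - x), mul_nonneg hu.le hw]
    calc x ^ α ≤ ((u + s / 2) * (1 + 2 * w)) ^ α := rpow_le_rpow hx.le hx_le hα
      _ = (u + s / 2) ^ α * (1 + 2 * w) ^ α := mul_rpow (by positivity) (by positivity)
      _ ≤ (u + s / 2) ^ α * exp (2 * w) ^ α := by
          gcongr; linarith [add_one_le_exp (2 * w)]
      _ = (u + s / 2) ^ α * exp (2 * α * w) := by rw [← exp_mul]; ring_nf
  have hgauss : exp (-(u - x) ^ 2 / (c * t)) = exp (-(w ^ 2 / c)) := by
    rw [hw_def, ht_eq, div_pow, sq_abs]; ring_nf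
  calc t ^ (-(1 / 2) : ℝ) * ((besselMeasure α) (Metric.ball u s ∩ Ioi 0)).toReal⁻¹ *
        exp (-(u - x) ^ 2 / (c * t))
      ≤ s⁻¹ * (s / 2 * (u + s / 2) ^ α)⁻¹ * exp (-(w ^ 2 / c)) := by
        rw [hrpow, hgauss]; gcongr
    _ = 2 * (x ^ α)⁻¹ * ((u - x) ^ 2)⁻¹ *
          (w ^ 2 * (x ^ α / (u + s / 2) ^ α) * exp (-(w ^ 2 / c))) := by
        rw [hw_def, div_pow, sq_abs]; field_simp
    _ ≤ 2 * (x ^ α)⁻¹ * ((u - x) ^ 2)⁻¹ *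
          (w ^ 2 * exp (2 * α * w) * exp (-(w ^ 2 / c))) := by
        gcongr
        rw [div_le_iff₀ (by positivity)]; linarith
    _ = 2 * (x ^ α)⁻¹ * ((u - x) ^ 2)⁻¹ * (w ^ 2 * exp (2 * α * w - w ^ 2 / c)) := by
        rw [mul_assoc (w ^ 2), ← exp_add]; ring_nf
    _ ≤ 2 * (x ^ α)⁻¹ * ((u - x) ^ 2)⁻¹ * (2 * c * exp (c * (2 * α) ^ 2 / 2)) :=
        mul_le_mul_of_nonneg_left (sq_mul_exp_sub_le hc w) (by positivity)
    _ = 4 * c * exp (2 * c * α ^ 2) * (x ^ α)⁻¹ * ((u - x) ^ 2)⁻¹ := by ring_nf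

theorem rpow_neg_half_mul_inv_besselMeasure_ball_mul_exp_le_of_far {α c u x t cI τ : ℝ}
    (hα : 0 ≤ α) (hc : 0 < c) (hτ : 0 < τ) (hu : 0 < u) (huI : |u - cI| ≤ τ / 2) (hx : 0 < x)
    (hxI : 2 * τ ≤ |x - cI|) (ht : 0 < t) :
    t ^ (-(1 / 2) : ℝ) * ((besselMeasure α) (Metric.ball u (√t) ∩ Ioi 0)).toReal⁻¹ *
        exp (-(u - x) ^ 2 / (c * t)) ≤
      4 * (4 * c * exp (2 * c * α ^ 2)) * (x ^ α)⁻¹ * (τ ^ 2 + (x - cI) ^ 2)⁻¹ := by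
  have hfar := sq_add_sq_le_four_mul_sq_sub hτ huI hxI
  have hux : u ≠ x := by
    rintro rfl; nlinarith [sq_nonneg (u - cI)]
  refine (rpow_neg_half_mul_inv_besselMeasure_ball_mul_exp_le hα hc hu hx hux ht).trans ?_
  have hinv : ((u - x) ^ 2)⁻¹ ≤ 4 * (τ ^ 2 + (x - cI) ^ 2)⁻¹ := by
    calc ((u - x) ^ 2)⁻¹ ≤ ((τ ^ 2 + (x - cI) ^ 2) / 4)⁻¹ :=
          inv_anti₀ (by positivity) (by linarith)
      _ = 4 * (τ ^ 2 + (x - cI) ^ 2)⁻¹ := by rw [inv_div, div_eq_mul_inv]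
  calc 4 * c * exp (2 * c * α ^ 2) * (x ^ α)⁻¹ * ((u - x) ^ 2)⁻¹
      ≤ 4 * c * exp (2 * c * α ^ 2) * (x ^ α)⁻¹ * (4 * (τ ^ 2 + (x - cI) ^ 2)⁻¹) := by
        gcongr
    _ = _ := by ring

theorem abs_setIntegral_Ioi_mul_le_of_hasDerivAt {α cI τ L : ℝ} {k k' a : ℝ → ℝ} (hτ : 0 ≤ τ)
    (hI : 0 < cI - τ / 2) (hk : ∀ u, 0 < u → HasDerivAt k (k' u) u)
    (hk' : ∀ u ∈ Icc (cI - τ / 2) (cI + τ / 2), |k' u| ≤ L)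
    (ha : Integrable a (besselMeasure α))
    (hsupp : ∀ y ∉ Icc (cI - τ / 2) (cI + τ / 2), a y = 0)
    (hzero : ∫ y, a y ∂besselMeasure α = 0) :
    |∫ y in Ioi 0, k y * a y ∂besselMeasure α| ≤ L * (τ / 2) * ∫ y, |a y| ∂besselMeasure α := by
  have hcI : cI ∈ Icc (cI - τ / 2) (cI + τ / 2) := ⟨by linarith, by linarith⟩
  have hL : 0 ≤ L := (abs_nonneg _).trans (hk' cI hcI)
  have hlip : ∀ y ∈ Icc (cI - τ / 2) (cI + τ / 2), |k y - k cI| ≤ L * (τ / 2) := by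
    intro y hy
    have hkI : ∀ u ∈ Icc (cI - τ / 2) (cI + τ / 2),
        HasDerivWithinAt k (k' u) (Icc (cI - τ / 2) (cI + τ / 2)) u :=
      fun u hu => (hk u (hI.trans_le hu.1)).hasDerivWithinAt
    refine ((convex_Icc _ _).norm_image_sub_le_of_norm_hasDerivWithin_le hkI hk' hcI hy).trans ?_
    rw [norm_eq_abs]
    gcongr
    rw [abs_le]; constructor <;> linarith [hy.1, hy.2]
  have hkm : AEStronglyMeasurable k (besselMeasure α) := by
    rw [← besselMeasure_restrict_Ioi]
    exact ContinuousOn.aestronglyMeasurable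
      (fun u hu => (hk u hu).continuousAt.continuousWithinAt) measurableSet_Ioi
  rw [besselMeasure_restrict_Ioi]
  exact abs_integral_mul_le_of_integral_eq_zero hkm ha hzero hsupp hlip

theorem abs_setIntegral_Ioi_mul_le_of_gaussian_deriv {α C c cI τ t x : ℝ} {k k' a : ℝ → ℝ}
    (hα : 0 ≤ α) (hC : 0 ≤ C) (hc : 0 < c) (hτ : 0 < τ) (hI : 0 < cI - τ / 2) (ht : 0 < t)
    (hx : 0 < x) (hxI : 2 * τ ≤ |x - cI|) (hk : ∀ u, 0 < u → HasDerivAt k (k' u) u)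
    (hk' : ∀ u, 0 < u → |k' u| ≤ C * t ^ (-(1 / 2) : ℝ) *
      ((besselMeasure α) (Metric.ball u (√t) ∩ Ioi 0)).toReal⁻¹ * exp (-(u - x) ^ 2 / (c * t)))
    (ha : Integrable a (besselMeasure α))
    (hsupp : ∀ y ∉ Icc (cI - τ / 2) (cI + τ / 2), a y = 0)
    (hzero : ∫ y, a y ∂besselMeasure α = 0) :
    |∫ y in Ioi 0, k y * a y ∂besselMeasure α| ≤
      2 * C * (4 * c * exp (2 * c * α ^ 2)) * τ * (∫ y, |a y| ∂besselMeasure α) *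
        ((x ^ α)⁻¹ * (τ ^ 2 + (x - cI) ^ 2)⁻¹) := by
  have hL : ∀ u ∈ Icc (cI - τ / 2) (cI + τ / 2), |k' u| ≤
      C * (4 * (4 * c * exp (2 * c * α ^ 2)) * (x ^ α)⁻¹ * (τ ^ 2 + (x - cI) ^ 2)⁻¹) := by
    intro u hu
    have huI : |u - cI| ≤ τ / 2 := abs_le.2 ⟨by linarith [hu.1], by linarith [hu.2]⟩
    refine (hk' u (hI.trans_le hu.1)).trans ?_
    rw [mul_assoc C, mul_assoc C]
    exact mul_le_mul_of_nonneg_left (rpow_neg_half_mul_inv_besselMeasure_ball_mul_exp_le_of_far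
      hα hc hτ (hI.trans_le hu.1) huI hx hxI ht) hC
  refine (abs_setIntegral_Ioi_mul_le_of_hasDerivAt hτ.le hI hk hL ha hsupp hzero).trans_eq ?_
  ring

theorem setIntegral_besselMeasure_le_of_le {α B cI τ : ℝ} {F : ℝ → ℝ} {S : Set ℝ}
    (hS : MeasurableSet S) (hS0 : S ⊆ Ioi 0) (hτ : 0 < τ) (hB : 0 ≤ B) (hF0 : ∀ x, 0 ≤ F x)
    (hF : ∀ x ∈ S, F x ≤ B * ((x ^ α)⁻¹ * (τ ^ 2 + (x - cI) ^ 2)⁻¹)) :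
    ∫ x in S, F x ∂besselMeasure α ≤ B * (π / τ) := by
  set g := fun x : ℝ => (τ ^ 2 + (x - cI) ^ 2)⁻¹
  have hrpow_cancel : ∀ x ∈ S, x ^ α * ((x ^ α)⁻¹ * g x) = g x := fun x hx =>
    mul_inv_cancel_left₀ (rpow_pos_of_pos (hS0 hx) α).ne' _
  have hint : IntegrableOn (fun x => (x ^ α)⁻¹ * g x) S (besselMeasure α) := by
    rw [integrableOn_besselMeasure_iff hS hS0]
    exact (integrable_inv_sq_add_sq_sub cI hτ.ne').integrableOn.congr_fun
      (fun x hx => (hrpow_cancel x hx).symm) hS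
  calc ∫ x in S, F x ∂besselMeasure α
      ≤ ∫ x in S, B * ((x ^ α)⁻¹ * g x) ∂besselMeasure α :=
        integral_mono_of_nonneg (ae_of_all _ hF0) (hint.const_mul _)
          ((ae_restrict_iff' hS).2 (ae_of_all _ hF))
    _ = B * ∫ x in S, g x := by
        rw [integral_const_mul, setIntegral_besselMeasure hS hS0,
          setIntegral_congr_fun hS hrpow_cancel]
    _ ≤ B * ∫ x, g x :=
        mul_le_mul_of_nonneg_left (setIntegral_le_integral
          (integrable_inv_sq_add_sq_sub cI hτ.ne') (ae_of_all _ fun x => by positivity)) hB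
    _ = B * (π / τ) := by rw [integral_inv_sq_add_sq_sub cI hτ]

theorem cancellation_estimate (α C c : ℝ) (hα : 0 < α) (hC : 0 < C) (hc : 0 < c) :
    ∃ C' > (0 : ℝ), ∀ (P P' : ℝ → ℝ → ℝ → ℝ) (a : ℝ → ℝ) (cI τ : ℝ),
      0 < τ → 0 < cI - τ / 2 →
      (∀ t x y, 0 ≤ P t x y) →
      (∀ t x y, P t x y = P t y x) →
      (∀ t x y, 0 < t → 0 < x → 0 < y →
        P t x y ≤ C *
          (((besselMeasure α) (Metric.ball x (Real.sqrt t) ∩ Set.Ioi 0)).toReal)⁻¹ *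
          Real.exp (-(x - y) ^ 2 / (c * t))) →
      (∀ t x y, 0 < t → 0 < x → 0 < y →
        HasDerivAt (fun u => P t u y) (P' t x y) x) →
      (∀ t x y, 0 < t → 0 < x → 0 < y →
        |P' t x y| ≤ C * t ^ (-(1 / 2) : ℝ) *
          (((besselMeasure α) (Metric.ball x (Real.sqrt t) ∩ Set.Ioi 0)).toReal)⁻¹ *
          Real.exp (-(x - y) ^ 2 / (c * t))) →
      Integrable a (besselMeasure α) →
      (∀ x, x ∉ Set.Icc (cI - τ / 2) (cI + τ / 2) → a x = 0) →
      (∫ x, a x ∂(besselMeasure α)) = 0 →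
      (∫ x in {x : ℝ | 0 < x ∧ 2 * τ ≤ |x - cI|},
          (⨆ t ∈ Set.Ici (τ ^ 2), |∫ y in Set.Ioi (0 : ℝ), P t x y * a y ∂(besselMeasure α)|)
          ∂(besselMeasure α)) ≤
        C' * ∫ y, |a y| ∂(besselMeasure α) := by
  set K := 4 * c * exp (2 * c * α ^ 2)
  refine ⟨2 * π * C * K, by positivity, ?_⟩
  intro P P' a cI τ hτ hI _ hsymm _ hderiv hP' ha hsupp hzero
  set A := ∫ y, |a y| ∂besselMeasure α
  have hA : 0 ≤ A := integral_nonneg fun _ => abs_nonneg _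
  have hS : MeasurableSet {x : ℝ | 0 < x ∧ 2 * τ ≤ |x - cI|} :=
    measurableSet_Ioi.inter
      (measurableSet_le measurable_const (by fun_prop : Measurable fun x : ℝ => |x - cI|))
  refine (setIntegral_besselMeasure_le_of_le (B := 2 * C * K * τ * A) (cI := cI) hS
    (fun x hx => hx.1) hτ (by positivity)
    (fun x => Real.iSup_nonneg fun t => Real.iSup_nonneg fun _ => abs_nonneg _) ?_).trans_eq
    (by field_simp)
  rintro x ⟨hx, hxI⟩
  have hG : 0 ≤ 2 * C * K * τ * A * ((x ^ α)⁻¹ * (τ ^ 2 + (x - cI) ^ 2)⁻¹) := by positivity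
  refine Real.iSup_le (fun t => Real.iSup_le (fun ht => ?_) hG) hG
  have ht0 : 0 < t := (by positivity : (0 : ℝ) < τ ^ 2).trans_le ht
  have hk : ∀ u, 0 < u → HasDerivAt (fun y => P t x y) (P' t u x) u := fun u hu => by
    simpa only [hsymm t x] using hderiv t u x ht0 hu hx
  exact abs_setIntegral_Ioi_mul_le_of_gaussian_deriv hα.le hC.le hc hτ hI ht0 hx hxI hk
    (fun u hu => hP' t u x ht0 hu hx) ha hsupp hzero
end
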